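/- arXiv:1909.01415 — 2 statements merged into one kernel-verified Lean document; each statement's English description precedes it below -/
import Mathlib

section
/- Let X = G(U) with U ∼ Uniform[0,1] and G(u) = -log(1-u)/λ the quantile of Exp(λ). Then E[1/(nX)] = (1/n)∫₀¹ λ/(-log(1-u)) du = +∞, i.e., for comonotonic exponential channels the expected inverse of the sum diverges. Consequently, the worst-case zero-outage capacity with perfect CSIT is zero. -/
open Set MeasureTheory

/-! Since `-log (1 - u) ≤ u / (1 - u) ≤ 2u` on `(0, 1/2]`, the integrand is bounded below there
by a multiple of `1/u`, which is not integrable at `0`. -/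

lemma lintegral_Ioo_zero_ofReal_inv_eq_top {a : ℝ} (ha : 0 < a) :
    ∫⁻ u in Ioo 0 a, ENNReal.ofReal u⁻¹ = ⊤ := by
  by_contra h
  have hnonneg : 0 ≤ᵐ[volume.restrict (Ioo 0 a)] fun u : ℝ ↦ u⁻¹ := by
    filter_upwards [ae_restrict_mem measurableSet_Ioo] with u hu using inv_nonneg.2 hu.1.le
  have hint : IntegrableOn (·⁻¹) (Ioo 0 a) :=
    (lintegral_ofReal_ne_top_iff_integrable measurable_inv.aestronglyMeasurable hnonneg).1 h
  rw [← intervalIntegrable_iff_integrableOn_Ioo_of_le ha.le, intervalIntegrable_inv_iff] at hint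
  simp [ha.ne] at hint

lemma Real.neg_log_one_sub_le {u : ℝ} (hu : u < 1) : -Real.log (1 - u) ≤ u / (1 - u) := by
  have h1u : 0 < 1 - u := sub_pos.2 hu
  have := Real.one_sub_inv_le_log_of_pos h1u
  have hdiv : u / (1 - u) = (1 - u)⁻¹ - 1 := by field_simp; ring
  linarith

lemma Real.inv_two_mul_le_inv_neg_log_one_sub {u : ℝ} (hu₀ : 0 < u) (hu : u ≤ 1 / 2) :
    (2 * u)⁻¹ ≤ (-Real.log (1 - u))⁻¹ := by
  have hlog : 0 < -Real.log (1 - u) := neg_pos.2 (Real.log_neg (by linarith) (by linarith))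
  apply inv_anti₀ hlog
  calc -Real.log (1 - u) ≤ u / (1 - u) := Real.neg_log_one_sub_le (by linarith)
    _ ≤ 2 * u := by rw [div_le_iff₀ (by linarith)]; nlinarith

lemma lintegral_Ioo_ofReal_inv_neg_log_one_sub_eq_top :
    ∫⁻ u in Ioo (0 : ℝ) 1, ENNReal.ofReal (-Real.log (1 - u))⁻¹ = ⊤ := by
  refine eq_top_iff.2 ?_
  calc ⊤ = ENNReal.ofReal 2⁻¹ * ∫⁻ u in Ioo (0 : ℝ) (1 / 2), ENNReal.ofReal u⁻¹ := by
        rw [lintegral_Ioo_zero_ofReal_inv_eq_top (by norm_num), ENNReal.mul_top (by simp)]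
    _ = ∫⁻ u in Ioo (0 : ℝ) (1 / 2), ENNReal.ofReal (2 * u)⁻¹ := by
        rw [← lintegral_const_mul' _ _ ENNReal.ofReal_ne_top]
        refine lintegral_congr fun u ↦ ?_
        rw [mul_inv, ENNReal.ofReal_mul (by norm_num)]
    _ ≤ ∫⁻ u in Ioo (0 : ℝ) (1 / 2), ENNReal.ofReal (-Real.log (1 - u))⁻¹ :=
        setLIntegral_mono' measurableSet_Ioo fun u hu ↦
          ENNReal.ofReal_le_ofReal (Real.inv_two_mul_le_inv_neg_log_one_sub hu.1 hu.2.le)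
    _ ≤ _ := lintegral_mono_set (Ioo_subset_Ioo le_rfl (by norm_num))

theorem comonotonic_csit_zero_general (n : ℕ) (hn : 1 ≤ n) (l ρ : ℝ) (hl : 0 < l) :
    (∫⁻ u in Ioo (0 : ℝ) 1,
        ENNReal.ofReal ((n * (-Real.log (1 - u) / l))⁻¹) = ⊤) ∧
      (if (∫⁻ u in Ioo (0 : ℝ) 1,
            ENNReal.ofReal ((n * (-Real.log (1 - u) / l))⁻¹)) = ⊤ then (0 : ℝ)
        else Real.logb 2 (1 + ρ *
          ((∫⁻ u in Ioo (0 : ℝ) 1,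
            ENNReal.ofReal ((n * (-Real.log (1 - u) / l))⁻¹)).toReal)⁻¹)) = 0 := by
  have hscale : 0 < l / n := div_pos hl (by exact_mod_cast hn)
  have hdiverges : ∫⁻ u in Ioo (0 : ℝ) 1,
      ENNReal.ofReal ((n * (-Real.log (1 - u) / l))⁻¹) = ⊤ := by
    calc _ = ∫⁻ u in Ioo (0 : ℝ) 1,
            ENNReal.ofReal (l / n) * ENNReal.ofReal (-Real.log (1 - u))⁻¹ := by
          congr! 2 with u
          rw [← ENNReal.ofReal_mul hscale.le, mul_inv, inv_div]
          congr 1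
          ring
      _ = ⊤ := by
          rw [lintegral_const_mul' _ _ ENNReal.ofReal_ne_top,
            lintegral_Ioo_ofReal_inv_neg_log_one_sub_eq_top,
            ENNReal.mul_top (ENNReal.ofReal_pos.2 hscale).ne']
  exact ⟨hdiverges, if_pos hdiverges⟩

/-- For comonotonic exponential channels `|h i|² = G U` with `G u = -log(1-u)/l` and
`U ∼ Uniform[0,1]`, the expected inverse of the sum `E[1/(n G(U))]` diverges:
`∫₀¹ (n · (-log(1-u)/l))⁻¹ du = ∞`.  Consequently the worst-case zero-outage capacity with
perfect CSIT (interpreted as `0` when the expectation is infinite) is zero. -/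
theorem comonotonic_csit_zero (n : ℕ) (hn : 1 ≤ n) (l ρ : ℝ) (hl : 0 < l) (hρ : 0 < ρ) :
    (∫⁻ u in Ioo (0 : ℝ) 1,
        ENNReal.ofReal ((n * (-Real.log (1 - u) / l))⁻¹) = ⊤) ∧
      (if (∫⁻ u in Ioo (0 : ℝ) 1,
            ENNReal.ofReal ((n * (-Real.log (1 - u) / l))⁻¹)) = ⊤ then (0 : ℝ)
        else Real.logb 2 (1 + ρ *
          ((∫⁻ u in Ioo (0 : ℝ) 1,
            ENNReal.ofReal ((n * (-Real.log (1 - u) / l))⁻¹)).toReal)⁻¹)) = 0 :=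
  comonotonic_csit_zero_general n hn l ρ hl
end

section
/- Let F₁, …, Fₙ be continuous CDFs and X₁, …, Xₙ random variables with Xᵢ ∼ Fᵢ. For any threshold s, the infimum m(s) over all joint distributions (couplings) of P(X₁ + ⋯ + Xₙ < s) satisfies m(s) ≥ Φ^{-1}(s), where Φ(a) = Σᵢ E[Xᵢ | Xᵢ ≥ Gᵢ(a)] and Gᵢ = Fᵢ^{-1}. In particular, for any coupling, if P(Σᵢ Xᵢ < s) < ε then s ≤ Φ(ε). -/
open Set MeasureTheory Finset

/-- If the CDF of a real random variable is continuous, the distribution has no atoms. -/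
lemma atom_zero_of_continuous_cdf {Ω : Type*} [MeasurableSpace Ω] (μ : Measure Ω)
    [IsProbabilityMeasure μ] (X : Ω → ℝ) (hX : Measurable X) (F : ℝ → ℝ)
    (hF : ∀ x, F x = (μ {ω | X ω ≤ x}).toReal) (hFcont : Continuous F) (x : ℝ) :
    μ {ω | X ω = x} = 0 := by
  have key : ∀ y ∈ Iio x, (μ {ω | X ω = x}).toReal ≤ F x - F y := by
    intro y hy
    have hsub : {ω | X ω = x} ⊆ {ω | X ω ≤ x} \ {ω | X ω ≤ y} := by
      intro ω hω
      simp only [mem_setOf_eq] at hω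
      refine ⟨by simp [hω], ?_⟩
      simp only [mem_setOf_eq, hω, not_le]
      exact hy
    have hsub2 : {ω | X ω ≤ y} ⊆ {ω | X ω ≤ x} := fun ω hω =>
      show X ω ≤ x from le_trans hω (le_of_lt hy)
    have hdiff : μ ({ω | X ω ≤ x} \ {ω | X ω ≤ y})
        = μ {ω | X ω ≤ x} - μ {ω | X ω ≤ y} :=
      measure_diff hsub2 (hX measurableSet_Iic).nullMeasurableSet (measure_ne_top μ _)
    have h1 : μ {ω | X ω = x} ≤ μ {ω | X ω ≤ x} - μ {ω | X ω ≤ y} := by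
      rw [← hdiff]; exact measure_mono hsub
    have h2 : (μ {ω | X ω = x}).toReal ≤ (μ {ω | X ω ≤ x} - μ {ω | X ω ≤ y}).toReal :=
      ENNReal.toReal_mono (by
        exact ne_of_lt (lt_of_le_of_lt tsub_le_self (measure_lt_top μ _))) h1
    rwa [ENNReal.toReal_sub_of_le (measure_mono hsub2) (measure_ne_top μ _),
      ← hF, ← hF] at h2
  have htend : Filter.Tendsto (fun y => F x - F y) (nhdsWithin x (Iio x)) (nhds 0) := by
    have h : Filter.Tendsto F (nhdsWithin x (Iio x)) (nhds (F x)) :=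
      (hFcont.tendsto x).mono_left nhdsWithin_le_nhds
    have := Filter.Tendsto.sub (tendsto_const_nhds (x := F x)
      (f := nhdsWithin x (Iio x))) h
    simpa using this
  have hle : (μ {ω | X ω = x}).toReal ≤ 0 :=
    ge_of_tendsto htend (Filter.eventually_iff_exists_mem.2
      ⟨Iio x, self_mem_nhdsWithin, key⟩)
  have h0 : (μ {ω | X ω = x}).toReal = 0 := le_antisymm hle ENNReal.toReal_nonneg
  exact (ENNReal.toReal_eq_zero_iff _).1 h0 |>.resolve_right (measure_ne_top μ _)

/-- Wang-type bound: let `X 1, …, X n` be integrable random variables on a common probability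
space (an arbitrary coupling) with continuous strictly increasing marginal CDFs `F i` and
quantiles `G i`, and let `Φ(a) = ∑ i, E[X i | X i ≥ G i a]`.  Then for any threshold `s` and
any `ε ∈ (0,1)`: if `P(∑ i, X i < s) < ε` then `s ≤ Φ(ε)`.  (This expresses the bound
`m(s) ≥ Φ⁻¹(s)` on the infimum `m(s)` over all couplings of `P(∑ X i < s)`.) -/
theorem coupling_outage_bound {Ω : Type*} [MeasurableSpace Ω] (μ : Measure Ω)
    [IsProbabilityMeasure μ] (n : ℕ) (hn : 1 ≤ n)
    (X : Fin n → Ω → ℝ) (hXmeas : ∀ i, Measurable (X i))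
    (hXint : ∀ i, Integrable (X i) μ)
    (F G : Fin n → ℝ → ℝ)
    (hF : ∀ i x, F i x = (μ {ω | X i ω ≤ x}).toReal)
    (hFcont : ∀ i, Continuous (F i)) (hFmono : ∀ i, StrictMono (F i))
    (hGF : ∀ i x, G i (F i x) = x)
    (hFG : ∀ i, ∀ a ∈ Ioo (0 : ℝ) 1, F i (G i a) = a)
    (Φ : ℝ → ℝ)
    (hΦ : ∀ a, Φ a = ∑ i, (∫ ω in {ω | G i a ≤ X i ω}, X i ω ∂μ) / (1 - a)) :
    ∀ s : ℝ, ∀ ε ∈ Ioo (0 : ℝ) 1,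
      (μ {ω | ∑ i, X i ω < s}).toReal < ε → s ≤ Φ ε := by
  intro s ε hε hlt
  obtain ⟨hε0, hε1⟩ := hε
  have ht : (0:ℝ) < 1 - ε := by linarith
  set A : Set Ω := {ω | s ≤ ∑ i, X i ω} with hA_def
  have hsum_meas : Measurable fun ω => ∑ i, X i ω :=
    Finset.measurable_sum _ fun i _ => hXmeas i
  have hA : MeasurableSet A := measurableSet_le measurable_const hsum_meas
  have hAc : Aᶜ = {ω | ∑ i, X i ω < s} := by ext ω; simp [hA_def, not_le]
  set p := (μ A).toReal with hp_def
  have hpA : (μ Aᶜ).toReal = 1 - p := by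
    rw [measure_compl hA (measure_ne_top μ A), measure_univ,
      ENNReal.toReal_sub_of_le prob_le_one ENNReal.one_ne_top]
    simp [hp_def]
  have hp : 1 - ε < p := by rw [hAc] at hpA; linarith
  have hp0 : 0 < p := lt_trans ht hp
  set B : Fin n → Set Ω := fun i => {ω | G i ε ≤ X i ω} with hB_def
  have hB : ∀ i, MeasurableSet (B i) := fun i =>
    measurableSet_le measurable_const (hXmeas i)
  have hμB : ∀ i, (μ (B i)).toReal = 1 - ε := by
    intro i
    have hatom := atom_zero_of_continuous_cdf μ (X i) (hXmeas i) (F i) (hF i)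
      (hFcont i) (G i ε)
    have hle_eq : μ {ω | X i ω ≤ G i ε} = μ {ω | X i ω < G i ε} := by
      have hset : {ω | X i ω ≤ G i ε}
          = {ω | X i ω < G i ε} ∪ {ω | X i ω = G i ε} := by
        ext ω; simp [le_iff_lt_or_eq]
      rw [hset]
      refine le_antisymm ?_ (measure_mono subset_union_left)
      calc μ ({ω | X i ω < G i ε} ∪ {ω | X i ω = G i ε})
          ≤ μ {ω | X i ω < G i ε} + μ {ω | X i ω = G i ε} := measure_union_le _ _
        _ = μ {ω | X i ω < G i ε} := by rw [hatom, add_zero]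
    have hltval : (μ {ω | X i ω < G i ε}).toReal = ε := by
      rw [← hle_eq, ← hF i (G i ε), hFG i ε ⟨hε0, hε1⟩]
    have hBc : B i = {ω | X i ω < G i ε}ᶜ := by
      ext ω; simp [hB_def, not_lt]
    rw [hBc, measure_compl (measurableSet_lt (hXmeas i) measurable_const)
      (measure_ne_top μ _), measure_univ,
      ENNReal.toReal_sub_of_le prob_le_one ENNReal.one_ne_top, hltval]
    simp
  have hIsum : IntegrableOn (fun ω => ∑ i, X i ω) A μ :=
    (integrable_finset_sum _ fun i _ => hXint i).integrableOn
  have h1 : s * p ≤ ∫ ω in A, ∑ i, X i ω ∂μ := by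
    have h := setIntegral_mono_on (f := fun _ => s)
      (integrableOn_const (measure_ne_top μ A)) hIsum hA
      (fun ω hω => hω)
    simpa [setIntegral_const, measureReal_def, mul_comm] using h
  have h2 : ∫ ω in A, ∑ i, X i ω ∂μ = ∑ i, ∫ ω in A, X i ω ∂μ :=
    integral_finset_sum _ fun i _ => (hXint i).integrableOn
  have h3 : ∀ i, ∫ ω in A, X i ω ∂μ
      ≤ (∫ ω in B i, X i ω ∂μ) + G i ε * (p - (1 - ε)) := by
    intro i
    have hdA : (∫ ω in A ∩ B i, X i ω ∂μ) + (∫ ω in A \ B i, X i ω ∂μ)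
        = ∫ ω in A, X i ω ∂μ :=
      integral_inter_add_diff (hB i) (hXint i).integrableOn
    have hdB : (∫ ω in B i ∩ A, X i ω ∂μ) + (∫ ω in B i \ A, X i ω ∂μ)
        = ∫ ω in B i, X i ω ∂μ :=
      integral_inter_add_diff hA (hXint i).integrableOn
    rw [Set.inter_comm] at hdB
    have hABm : (μ (A ∩ B i)).toReal + (μ (A \ B i)).toReal = p := by
      rw [← ENNReal.toReal_add (measure_ne_top μ _) (measure_ne_top μ _),
        measure_inter_add_diff A (hB i)]
    have hBAm : (μ (B i ∩ A)).toReal + (μ (B i \ A)).toReal = 1 - ε := by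
      rw [← ENNReal.toReal_add (measure_ne_top μ _) (measure_ne_top μ _),
        measure_inter_add_diff (B i) hA, hμB i]
    rw [Set.inter_comm] at hBAm
    have hup : ∫ ω in A \ B i, X i ω ∂μ ≤ G i ε * (μ (A \ B i)).toReal := by
      have h := setIntegral_mono_on (g := fun _ => G i ε)
        (hXint i).integrableOn
        (integrableOn_const (measure_ne_top μ _))
        (hA.diff (hB i)) (fun ω hω => by
          have h2 := hω.2
          simp only [hB_def, mem_setOf_eq, not_le] at h2
          exact h2.le)
      simpa [setIntegral_const, measureReal_def, mul_comm] using h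
    have hlow : G i ε * (μ (B i \ A)).toReal ≤ ∫ ω in B i \ A, X i ω ∂μ := by
      have h := setIntegral_mono_on (f := fun _ => G i ε)
        (integrableOn_const (measure_ne_top μ _))
        (hXint i).integrableOn
        ((hB i).diff hA) (fun ω hω => by
          have h1 := hω.1
          simp only [hB_def, mem_setOf_eq] at h1
          exact h1)
      simpa [setIntegral_const, measureReal_def, mul_comm] using h
    have hmul : G i ε * (μ (A \ B i)).toReal - G i ε * (μ (B i \ A)).toReal
        = G i ε * (p - (1 - ε)) := by
      rw [← mul_sub]; congr 1; linarith
    linarith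
  have h4 : ∀ i, G i ε * (1 - ε) ≤ ∫ ω in B i, X i ω ∂μ := by
    intro i
    have h := setIntegral_mono_on (f := fun _ => G i ε)
      (integrableOn_const (measure_ne_top μ _))
      (hXint i).integrableOn (hB i) (fun ω hω => by
        simp only [hB_def, mem_setOf_eq] at hω
        exact hω)
    rw [setIntegral_const, measureReal_def, hμB i] at h
    simpa [mul_comm] using h
  set S := ∑ i, ∫ ω in B i, X i ω ∂μ with hS_def
  have hsum3 : s * p ≤ S + (∑ i, G i ε) * (p - (1 - ε)) := by
    calc s * p ≤ ∑ i, ∫ ω in A, X i ω ∂μ := by rw [← h2]; exact h1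
      _ ≤ ∑ i, ((∫ ω in B i, X i ω ∂μ) + G i ε * (p - (1 - ε))) :=
        Finset.sum_le_sum fun i _ => h3 i
      _ = S + (∑ i, G i ε) * (p - (1 - ε)) := by
        rw [Finset.sum_add_distrib, ← Finset.sum_mul]
  have hsum4 : (∑ i, G i ε) * (1 - ε) ≤ S := by
    calc (∑ i, G i ε) * (1 - ε) = ∑ i, G i ε * (1 - ε) := by rw [Finset.sum_mul]
      _ ≤ S := Finset.sum_le_sum fun i _ => h4 i
  have hfin : s * (1 - ε) ≤ S := by
    have hpt : 0 ≤ p - (1 - ε) := by linarith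
    nlinarith [mul_le_mul_of_nonneg_right hsum3 ht.le,
      mul_le_mul_of_nonneg_right hsum4 hpt]
  rw [hΦ ε, ← Finset.sum_div, ← hS_def, le_div_iff₀ ht]
  exact hfin
end
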